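/- Suppose the spectral regularizer $\mathcal{P}_\lambda(\Theta)=\sum_{j=1}^d p_\lambda(\sigma_j(\Theta))$ is built from a function $p_\lambda:\mathbb{R}_+\to\mathbb{R}_+$ that is concave, nondecreasing, with $p_\lambda(0)=0$ and $p_\lambda(t)/t$ nonincreasing for $t>0$. Then for all matrices $\Theta,\Theta'\in\mathbb{R}^{d_1\times d_2}$: $\mathcal{P}_\lambda(\Theta+\Theta')\le\mathcal{P}_\lambda(\Theta)+\mathcal{P}_\lambda(\Theta')$ and $\mathcal{P}_\lambda(\Theta-\Theta')\ge\mathcal{P}_\lambda(\Theta)-\mathcal{P}_\lambda(\Theta')$. -/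

import Mathlib

/-- The `j`-th singular value of a real matrix `A`. -/
noncomputable def singularValue {d1 d2 : ℕ} (A : Matrix (Fin d1) (Fin d2) ℝ)
    (j : Fin d2) : ℝ :=
  Real.sqrt ((Matrix.isHermitian_conjTranspose_mul_self A).eigenvalues j)

/-- The spectral regularizer `𝒫_λ(Θ) = ∑_j p_λ(σ_j(Θ))`. -/
noncomputable def specReg {d1 d2 : ℕ} (p : ℝ → ℝ)
    (A : Matrix (Fin d1) (Fin d2) ℝ) : ℝ :=
  ∑ j, p (singularValue A j)

/-!
A concave nondecreasing `p` with `p 0 = 0` agrees, on any finite set of nonnegative reals, with a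
nonnegative combination of the truncations `t ↦ min t u`; so it suffices to show that
`Θ ↦ ∑ⱼ min (σⱼ Θ) s` is subadditive for every `s ≥ 0`.

For `C = A + B` with right singular vectors `vᵢ` and left singular vectors `uᵢ`, let `P` be the
orthogonal projection onto the complement of the span of those right singular vectors of `A` and
of `B` whose singular value exceeds `s` (there are `r_A + r_B` of them). With `tᵢ = ⟪vᵢ, P vᵢ⟫`,
`min σᵢ s ≤ σᵢ tᵢ + s (1 - tᵢ)` and `∑ (1 - tᵢ) = rank (1 - P) ≤ r_A + r_B`, while
`∑ σᵢ tᵢ = ∑ ⟪uᵢ, A (P vᵢ)⟫ + ∑ ⟪uᵢ, B (P vᵢ)⟫`; since `P` kills the large singular vectors, each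
of these sums is at most the sum of the singular values `≤ s` of `A`, resp. `B`.
-/

open Finset
open scoped RealInnerProductSpace

lemma ConcaveOn.slope_le_slope {s : Set ℝ} {f : ℝ → ℝ} (hf : ConcaveOn ℝ s f) {x y a b : ℝ}
    (hx : x ∈ s) (hb : b ∈ s) (hxy : x < y) (hya : y ≤ a) (hab : a < b) :
    slope f a b ≤ slope f x y := by
  have hmem : ∀ {z}, x ≤ z → z ≤ b → z ∈ s := fun h h' => hf.1.ordConnected.out hx hb ⟨h, h'⟩
  calc slope f a b = slope f b a := slope_comm f a b
    _ ≤ slope f b x := hf.slope_anti hb ⟨hx, by simp; linarith⟩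
        ⟨hmem (by linarith) (by linarith), by simp; linarith⟩ (by linarith)
    _ = slope f x b := slope_comm f b x
    _ ≤ slope f x y := hf.slope_anti hx ⟨hmem hxy.le (by linarith), by simp; linarith⟩
        ⟨hb, by simp; linarith⟩ (by linarith)

lemma ConcaveOn.monotoneOn_sub_slope_mul {f : ℝ → ℝ} (hf : ConcaveOn ℝ (Set.Ici 0) f) {a b : ℝ}
    (hab : a < b) : MonotoneOn (fun x => f x - slope f a b * x) (Set.Icc 0 a) := by
  intro x hx y hy hxy
  rcases hxy.eq_or_lt with rfl | hxy
  · rfl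
  have h := hf.slope_le_slope hx.1 (Set.mem_Ici.mpr (by linarith [hx.1, hx.2])) hxy hy.2 hab
  rw [slope_def_field (a := x), le_div_iff₀ (by linarith)] at h
  linarith

theorem ConcaveOn.exists_eq_sum_mul_min (S : Finset ℝ) {f : ℝ → ℝ} (hS : ∀ u ∈ S, 0 < u)
    (hf : ConcaveOn ℝ (Set.Ici 0) f) (hmono : MonotoneOn f (insert 0 S : Finset ℝ))
    (h0 : f 0 = 0) :
    ∃ a : ℝ → ℝ, (∀ u ∈ S, 0 ≤ a u) ∧ ∀ x ∈ insert 0 S, f x = ∑ u ∈ S, a u * min x u := by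
  induction S using Finset.induction_on_max generalizing f with
  | empty => exact ⟨0, by simp, by simp [h0]⟩
  | insert t S hlt ih =>
    have htS : t ∉ S := fun h => (hlt t h).false
    set t' := (insert 0 S).max' (insert_nonempty 0 S)
    have ht'mem : t' ∈ insert 0 S := max'_mem _ _
    have hle_t' : ∀ x ∈ insert 0 S, x ≤ t' := fun x hx => le_max' _ x hx
    have ht't : t' < t := by
      rcases Finset.mem_insert.mp ht'mem with h | h
      · exact h ▸ hS t (mem_insert_self t S)
      · exact hlt t' h
    have hnonneg : ∀ x ∈ insert 0 S, 0 ≤ x := fun x hx => by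
      rcases Finset.mem_insert.mp hx with rfl | h
      · exact le_rfl
      · exact (hS x (mem_insert_of_mem h)).le
    -- Peel off the last linear piece: `f x = g x + c * x`, `c` the slope of `f` on `[t', t]`.
    set c := slope f t' t with hc_def
    have hc : 0 ≤ c := by
      have hsub : insert 0 S ⊆ insert 0 (insert t S) := insert_subset_insert 0 (subset_insert t S)
      rw [hc_def, slope_def_field]
      refine div_nonneg (sub_nonneg.mpr (hmono ?_ (by simp) ht't.le)) (by linarith)
      exact_mod_cast hsub ht'mem
    set g : ℝ → ℝ := fun x => f x - c * x
    have hg : ConcaveOn ℝ (Set.Ici 0) g := hf.sub ((convexOn_id (convex_Ici 0)).smul hc)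
    have hgmono : MonotoneOn g (insert 0 S : Finset ℝ) := (hf.monotoneOn_sub_slope_mul ht't).mono
      fun x hx => ⟨hnonneg x hx, hle_t' x hx⟩
    obtain ⟨a, ha0, ha⟩ := ih (fun u hu => hS u (mem_insert_of_mem hu)) hg hgmono (by simp [g, h0])
    refine ⟨Function.update a t c, fun u hu => ?_, fun x hx => ?_⟩
    · rcases eq_or_ne u t with rfl | hne
      · simpa using hc
      · simpa [hne] using ha0 u ((Finset.mem_insert.mp hu).resolve_left hne)
    rw [sum_insert htS, Function.update_self,
      sum_congr rfl fun u hu => by rw [Function.update_of_ne (ne_of_mem_of_not_mem hu htS)]]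
    have hx' : x = t ∨ x ∈ insert 0 S := by simp only [Finset.mem_insert] at hx ⊢; tauto
    rcases hx' with rfl | hx
    · have hmin : ∀ u ∈ S, min x u = min t' u := fun u hu => by
        rw [min_eq_right (hlt u hu).le, min_eq_right (hle_t' u (mem_insert_of_mem hu))]
      rw [sum_congr rfl fun u hu => by rw [hmin u hu], ← ha t' ht'mem, min_self]
      have : c * (x - t') = f x - f t' := by
        rw [hc_def, slope_def_field]; exact div_mul_cancel₀ _ (by linarith)
      simp only [g]
      linarith
    · rw [min_eq_left (le_trans (hle_t' x hx) ht't.le), ← ha x hx]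
      simp [g]

lemma sum_eq_sum_mul_sum_min {τ : Type*} [Fintype τ] {p a : ℝ → ℝ} {S T : Finset ℝ}
    (ha : ∀ x ∈ T, p x = ∑ u ∈ S, a u * min x u) {z : τ → ℝ} (hz : ∀ j, z j ∈ T) :
    ∑ j, p (z j) = ∑ u ∈ S, a u * ∑ j, min (z j) u := by
  simp_rw [ha _ (hz _), mul_sum]
  exact sum_comm

theorem ConcaveOn.sum_le_sum_of_sum_min_le {ι κ : Type*} [Fintype ι] [Fintype κ] {p : ℝ → ℝ}
    (hconc : ConcaveOn ℝ (Set.Ici 0) p) (hmono : MonotoneOn p (Set.Ici 0)) (h0 : p 0 = 0)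
    {x : ι → ℝ} {y : κ → ℝ} (hx : ∀ i, 0 ≤ x i) (hy : ∀ k, 0 ≤ y k)
    (h : ∀ s, 0 < s → ∑ i, min (x i) s ≤ ∑ k, min (y k) s) :
    ∑ i, p (x i) ≤ ∑ k, p (y k) := by
  set S := (univ.image x ∪ univ.image y).filter (0 < ·)
  have hmem : ∀ z, 0 ≤ z → z ∈ univ.image x ∪ univ.image y → z ∈ insert 0 S := by
    intro z hz0 hz
    rcases hz0.eq_or_lt with rfl | hpos
    · exact mem_insert_self 0 S
    · exact mem_insert_of_mem (mem_filter.mpr ⟨hz, hpos⟩)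
  obtain ⟨a, ha0, ha⟩ := hconc.exists_eq_sum_mul_min S (fun u hu => (mem_filter.mp hu).2)
    (hmono.mono fun z hz => by
      rcases Finset.mem_insert.mp hz with rfl | hz
      · exact Set.self_mem_Ici
      · exact (mem_filter.mp hz).2.le) h0
  rw [sum_eq_sum_mul_sum_min ha fun i => hmem _ (hx i) (mem_union_left _ (mem_image_of_mem x
      (mem_univ i))), sum_eq_sum_mul_sum_min ha fun k => hmem _ (hy k) (mem_union_right _
      (mem_image_of_mem y (mem_univ k)))]
  exact sum_le_sum fun u hu => mul_le_mul_of_nonneg_left (h u (mem_filter.mp hu).2) (ha0 u hu)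

section
variable {E F : Type*} [NormedAddCommGroup E] [InnerProductSpace ℝ E]
  [NormedAddCommGroup F] [InnerProductSpace ℝ F] {ι κ : Type*} [Fintype ι] [Fintype κ]

lemma norm_sum_smul_sq_of_pairwise_inner {u : ι → F} (hu : Pairwise fun i j => ⟪u i, u j⟫ = 0)
    (c : ι → ℝ) : ‖∑ i, c i • u i‖ ^ 2 = ∑ i, c i ^ 2 * ‖u i‖ ^ 2 := by
  rw [← real_inner_self_eq_norm_sq, sum_inner]
  refine sum_congr rfl fun i _ => ?_
  rw [inner_sum, sum_eq_single i (fun j _ hji => by rw [real_inner_smul_left,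
    real_inner_smul_right, hu hji.symm, mul_zero, mul_zero]) (by simp),
    real_inner_smul_left, real_inner_smul_right, real_inner_self_eq_norm_sq]
  ring

lemma norm_sum_inner_smul_le (v : OrthonormalBasis ι ℝ E) {u : ι → F}
    (hu : Pairwise fun i j => ⟪u i, u j⟫ = 0) (hu1 : ∀ i, ‖u i‖ ≤ 1) (x : E) :
    ‖∑ i, ⟪v i, x⟫ • u i‖ ≤ ‖x‖ := by
  refine le_of_sq_le_sq ?_ (norm_nonneg x)
  rw [norm_sum_smul_sq_of_pairwise_inner hu, ← v.sum_sq_norm_inner_right x]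
  refine sum_le_sum fun i _ => ?_
  rw [Real.norm_eq_abs, sq_abs]
  exact mul_le_of_le_one_right (sq_nonneg _) (pow_le_one₀ (norm_nonneg _) (hu1 i))

lemma sum_inner_apply_le (v : OrthonormalBasis ι ℝ E) (w : OrthonormalBasis κ ℝ E) {u : ι → F}
    (hu : Pairwise fun i j => ⟪u i, u j⟫ = 0) (hu1 : ∀ i, ‖u i‖ ≤ 1)
    {P : E →ₗ[ℝ] E} (hP : P.IsSymmetric) (A : E →ₗ[ℝ] F) :
    ∑ i, ⟪u i, A (P (v i))⟫ ≤ ∑ k, ‖P (w k)‖ * ‖A (w k)‖ := by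
  calc ∑ i, ⟪u i, A (P (v i))⟫ = ∑ i, ∑ k, ⟪v i, P (w k)⟫ * ⟪u i, A (w k)⟫ := by
        refine sum_congr rfl fun i _ => ?_
        conv_lhs => rw [← w.sum_repr' (P (v i))]
        simp only [map_sum, map_smul, inner_sum, real_inner_smul_right]
        exact sum_congr rfl fun k _ => by rw [← hP, real_inner_comm]
    _ = ∑ k, ⟪∑ i, ⟪v i, P (w k)⟫ • u i, A (w k)⟫ := by
        rw [sum_comm]
        simp only [sum_inner, real_inner_smul_left]
    _ ≤ ∑ k, ‖∑ i, ⟪v i, P (w k)⟫ • u i‖ * ‖A (w k)‖ :=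
        sum_le_sum fun k _ => real_inner_le_norm _ _
    _ ≤ ∑ k, ‖P (w k)‖ * ‖A (w k)‖ := sum_le_sum fun k _ =>
        mul_le_mul_of_nonneg_right (norm_sum_inner_smul_le v hu hu1 _) (norm_nonneg _)

lemma exists_leftSingularVectors (v : OrthonormalBasis ι ℝ E) {C : E →ₗ[ℝ] F}
    (hC : Pairwise fun i j => ⟪C (v i), C (v j)⟫ = 0) :
    ∃ u : ι → F, (Pairwise fun i j => ⟪u i, u j⟫ = 0) ∧ (∀ i, ‖u i‖ ≤ 1) ∧
      ∀ i y, ⟪u i, C y⟫ = ‖C (v i)‖ * ⟪v i, y⟫ := by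
  refine ⟨fun i => ‖C (v i)‖⁻¹ • C (v i), fun i j hij => ?_, fun i => ?_, fun i y => ?_⟩
  · simp only [real_inner_smul_left, real_inner_smul_right, hC hij, mul_zero]
  · rw [norm_smul, norm_inv, norm_norm]
    exact inv_mul_le_one_of_le₀ le_rfl (norm_nonneg _)
  · conv_lhs => rw [← v.sum_repr' y]
    simp only [map_sum, map_smul, inner_sum, real_inner_smul_left, real_inner_smul_right]
    rw [sum_eq_single i (fun j _ hji => by rw [hC hji.symm, mul_zero, mul_zero]) (by simp),
      real_inner_self_eq_norm_sq]
    rcases eq_or_ne ‖C (v i)‖ 0 with h | h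
    · simp [h]
    · field_simp

lemma Submodule.real_inner_starProjection_self (K : Submodule ℝ E) [K.HasOrthogonalProjection]
    (x : E) : ⟪x, K.starProjection x⟫ = ‖K.starProjection x‖ ^ 2 := by
  rw [← K.starProjection_eq_self_iff.mpr (K.starProjection_apply_mem x),
    ← K.inner_starProjection_left_eq_right, K.starProjection_eq_self_iff.mpr
    (K.starProjection_apply_mem x), real_inner_self_eq_norm_sq]

lemma OrthonormalBasis.sum_inner_starProjection_eq_finrank (v : OrthonormalBasis ι ℝ E)
    (K : Submodule ℝ E) [FiniteDimensional ℝ E] :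
    ∑ i, ⟪v i, K.starProjection (v i)⟫ = Module.finrank ℝ K := by
  have h := LinearMap.trace_eq_sum_inner (K.starProjection : E →ₗ[ℝ] E) v
  rw [ContinuousLinearMap.coe_coe] at h
  rw [← h]
  exact LinearMap.IsProj.trace
    ⟨K.starProjection_apply_mem, fun x hx => K.starProjection_eq_self_iff.mpr hx⟩

lemma sum_norm_mul_norm_add_le_sum_min (w : OrthonormalBasis κ ℝ E) {P : E →ₗ[ℝ] E}
    (hP : ∀ x, ‖P x‖ ≤ ‖x‖) (C : E →ₗ[ℝ] F) {s : ℝ} (hC : ∀ k, s < ‖C (w k)‖ → P (w k) = 0) :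
    ∑ k, ‖P (w k)‖ * ‖C (w k)‖ + s * #{k | s < ‖C (w k)‖} ≤ ∑ k, min ‖C (w k)‖ s := by
  rw [← sum_boole, mul_sum, ← sum_add_distrib]
  refine sum_le_sum fun k _ => ?_
  by_cases h : s < ‖C (w k)‖
  · simp [h, hC k h, min_eq_right h.le]
  · rw [if_neg h, mul_zero, add_zero, min_eq_left (not_lt.mp h)]
    exact mul_le_of_le_one_left (norm_nonneg _) ((hP (w k)).trans_eq (w.orthonormal.1 k))

theorem LinearMap.sum_min_norm_add_le {κ' : Type*} [Fintype κ'] (A B : E →ₗ[ℝ] F)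
    (v : OrthonormalBasis ι ℝ E) (hv : Pairwise fun i j => ⟪(A + B) (v i), (A + B) (v j)⟫ = 0)
    (wA : OrthonormalBasis κ ℝ E) (wB : OrthonormalBasis κ' ℝ E) {s : ℝ} (hs : 0 ≤ s) :
    ∑ i, min ‖(A + B) (v i)‖ s ≤ ∑ k, min ‖A (wA k)‖ s + ∑ k, min ‖B (wB k)‖ s := by
  classical
  have := Module.Finite.of_basis v.toBasis
  obtain ⟨u, hu, hu1, huC⟩ := exists_leftSingularVectors v hv
  set TA := univ.filter fun k => s < ‖A (wA k)‖
  set TB := univ.filter fun k => s < ‖B (wB k)‖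
  set U := Submodule.span ℝ ((TA.image wA ∪ TB.image wB : Finset E) : Set E)
  set P : E →ₗ[ℝ] E := Uᗮ.starProjection
  have hP : P.IsSymmetric := Uᗮ.starProjection_isSymmetric
  have hU : ∀ x ∈ TA.image wA ∪ TB.image wB, P x = 0 := fun x hx =>
    Uᗮ.starProjection_apply_eq_zero_iff.mpr (U.le_orthogonal_orthogonal (Submodule.subset_span hx))
  set q : ι → ℝ := fun i => ⟪v i, U.starProjection (v i)⟫
  have hPv : ∀ i, ⟪v i, P (v i)⟫ = 1 - q i := fun i => by
    simp [P, q, Submodule.starProjection_orthogonal', inner_sub_right]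
  have hq : ∀ i, 0 ≤ q i ∧ q i ≤ 1 := fun i => by
    simp only [q, U.real_inner_starProjection_self]
    exact ⟨sq_nonneg _, pow_le_one₀ (norm_nonneg _)
      ((U.norm_starProjection_apply_le _).trans_eq (v.orthonormal.1 i))⟩
  have hsumq : ∑ i, q i ≤ #TA + #TB := by
    rw [v.sum_inner_starProjection_eq_finrank U]
    exact_mod_cast (finrank_span_finset_le_card _).trans
      ((card_union_le _ _).trans (add_le_add card_image_le card_image_le))
  have hsplit : ∑ i, ‖(A + B) (v i)‖ * (1 - q i)
      = ∑ i, ⟪u i, A (P (v i))⟫ + ∑ i, ⟪u i, B (P (v i))⟫ := by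
    rw [← sum_add_distrib]
    refine sum_congr rfl fun i _ => ?_
    rw [← hPv, ← huC, LinearMap.add_apply, inner_add_right]
  have hA := sum_norm_mul_norm_add_le_sum_min wA Uᗮ.norm_starProjection_apply_le A
    fun k hk => hU _ (mem_union_left _ (mem_image_of_mem wA (mem_filter.mpr ⟨mem_univ k, hk⟩)))
  have hB := sum_norm_mul_norm_add_le_sum_min wB Uᗮ.norm_starProjection_apply_le B
    fun k hk => hU _ (mem_union_right _ (mem_image_of_mem wB (mem_filter.mpr ⟨mem_univ k, hk⟩)))
  calc ∑ i, min ‖(A + B) (v i)‖ s ≤ ∑ i, (‖(A + B) (v i)‖ * (1 - q i) + s * q i) :=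
        sum_le_sum fun i _ => by
          nlinarith [min_le_left ‖(A + B) (v i)‖ s, min_le_right ‖(A + B) (v i)‖ s, hq i]
    _ = ∑ i, ⟪u i, A (P (v i))⟫ + ∑ i, ⟪u i, B (P (v i))⟫ + s * ∑ i, q i := by
        rw [sum_add_distrib, hsplit, mul_sum]
    _ ≤ ∑ k, ‖P (wA k)‖ * ‖A (wA k)‖ + ∑ k, ‖P (wB k)‖ * ‖B (wB k)‖ + s * (#TA + #TB) := by
        gcongr
        · exact sum_inner_apply_le v wA hu hu1 hP A
        · exact sum_inner_apply_le v wB hu hu1 hP B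
    _ ≤ _ := by linarith

end

namespace Matrix
variable {m n : Type*} [Fintype m] [Fintype n] [DecidableEq m] [DecidableEq n]

lemma inner_toEuclideanLin_eigenvectorBasis (C : Matrix m n ℝ) (i j : n) :
    ⟪toEuclideanLin C ((isHermitian_conjTranspose_mul_self C).eigenvectorBasis i),
      toEuclideanLin C ((isHermitian_conjTranspose_mul_self C).eigenvectorBasis j)⟫ =
      if i = j then (isHermitian_conjTranspose_mul_self C).eigenvalues i else 0 := by
  set hC := isHermitian_conjTranspose_mul_self C
  have heig : toEuclideanLin C.conjTranspose (toEuclideanLin C (hC.eigenvectorBasis j)) =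
      hC.eigenvalues j • hC.eigenvectorBasis j := by
    rw [← LinearMap.comp_apply, ← toLpLin_mul, toLpLin_apply, hC.mulVec_eigenvectorBasis]
    rfl
  rw [← LinearMap.adjoint_inner_right, ← toEuclideanLin_conjTranspose_eq_adjoint, heig,
    real_inner_smul_right, orthonormal_iff_ite.mp hC.eigenvectorBasis.orthonormal]
  split_ifs with h <;> simp [h]

end Matrix

lemma norm_toEuclideanLin_eigenvectorBasis {d1 d2 : ℕ} (C : Matrix (Fin d1) (Fin d2) ℝ)
    (j : Fin d2) :
    ‖Matrix.toEuclideanLin C ((Matrix.isHermitian_conjTranspose_mul_self C).eigenvectorBasis j)‖ =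
      singularValue C j := by
  rw [norm_eq_sqrt_real_inner, Matrix.inner_toEuclideanLin_eigenvectorBasis, if_pos rfl]
  rfl

lemma sum_min_singularValue_add_le {d1 d2 : ℕ} (A B : Matrix (Fin d1) (Fin d2) ℝ) {s : ℝ}
    (hs : 0 ≤ s) :
    ∑ j, min (singularValue (A + B) j) s ≤
      ∑ j, min (singularValue A j) s + ∑ j, min (singularValue B j) s := by
  have h := LinearMap.sum_min_norm_add_le (Matrix.toEuclideanLin A) (Matrix.toEuclideanLin B)
    (Matrix.isHermitian_conjTranspose_mul_self (A + B)).eigenvectorBasis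
    (fun i j hij => by
      beta_reduce
      rw [← map_add, Matrix.inner_toEuclideanLin_eigenvectorBasis, if_neg hij])
    (Matrix.isHermitian_conjTranspose_mul_self A).eigenvectorBasis
    (Matrix.isHermitian_conjTranspose_mul_self B).eigenvectorBasis hs
  simpa only [← map_add, norm_toEuclideanLin_eigenvectorBasis] using h

theorem specReg_add_le {d1 d2 : ℕ} {p : ℝ → ℝ} (hconc : ConcaveOn ℝ (Set.Ici 0) p)
    (hmono : MonotoneOn p (Set.Ici 0)) (h0 : p 0 = 0) (A B : Matrix (Fin d1) (Fin d2) ℝ) :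
    specReg p (A + B) ≤ specReg p A + specReg p B := by
  have h := hconc.sum_le_sum_of_sum_min_le hmono h0 (x := singularValue (A + B))
    (y := Sum.elim (singularValue A) (singularValue B)) (fun _ => Real.sqrt_nonneg _)
    (Sum.rec (fun _ => Real.sqrt_nonneg _) (fun _ => Real.sqrt_nonneg _))
    (fun s hs => by simpa [Fintype.sum_sum_type] using sum_min_singularValue_add_le A B hs.le)
  simpa [specReg, Fintype.sum_sum_type] using h

theorem specReg_triangle_general {d1 d2 : ℕ} (p : ℝ → ℝ)
    (hconc : ConcaveOn ℝ (Set.Ici 0) p) (hmono : MonotoneOn p (Set.Ici 0))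
    (h0 : p 0 = 0)
    (A B : Matrix (Fin d1) (Fin d2) ℝ) :
    specReg p (A + B) ≤ specReg p A + specReg p B ∧
      specReg p (A - B) ≥ specReg p A - specReg p B := by
  refine ⟨specReg_add_le hconc hmono h0 A B, ?_⟩
  have h := specReg_add_le hconc hmono h0 (A - B) B
  rw [sub_add_cancel] at h
  linarith

/-- if `p_λ : ℝ₊ → ℝ₊` is concave, nondecreasing, `p_λ 0 = 0` and
`p_λ(t)/t` nonincreasing for `t > 0`, then the spectral regularizer satisfies
`𝒫_λ(Θ + Θ') ≤ 𝒫_λ(Θ) + 𝒫_λ(Θ')` and `𝒫_λ(Θ - Θ') ≥ 𝒫_λ(Θ) - 𝒫_λ(Θ')`. -/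
theorem specReg_triangle {d1 d2 : ℕ} (p : ℝ → ℝ)
    (hconc : ConcaveOn ℝ (Set.Ici 0) p) (hmono : MonotoneOn p (Set.Ici 0))
    (h0 : p 0 = 0) (hnn : ∀ t : ℝ, 0 ≤ t → 0 ≤ p t)
    (hratio : ∀ s t : ℝ, 0 < s → s ≤ t → p t / t ≤ p s / s)
    (A B : Matrix (Fin d1) (Fin d2) ℝ) :
    specReg p (A + B) ≤ specReg p A + specReg p B ∧
      specReg p (A - B) ≥ specReg p A - specReg p B :=
  specReg_triangle_general p hconc hmono h0 A B
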